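/- In the Drinfel'd double D(A) = A ⊕ A^∨[1] of a finite-dimensional odd BV unital infinitesimal bialgebra with λη = 0 and |λ| = -1, define 𝛈 = η ∈ A, 𝛌𝛈 = -(1⊗s)coev + τ(1⊗s)coev, and 𝚫 = diag(Δ, -sΔ^∨ω). Then the BV Frobenius relation (𝚫⊗1)𝛌𝛈 = (1⊗𝚫)𝛌𝛈 holds in D(A)⊗D(A). -/

import Mathlib

/-!
Common framework: a "super" (parity-graded) module `A` over a field `R`, with parity
operator `ι = (-1)^deg`, Koszul twist `τ` on `A ⊗ A`, product `mul = μ`, unit `e = η(1)`,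
coproduct `cop = λ` (of odd degree) and BV operator `d = Δ` (of degree 1).
Operators such as `1⊗Δ`, `1⊗λ`, `1⊗Δ⊗1`, … carry Koszul signs, implemented by
inserting the parity operator `ι` on the tensor factors to the left of the odd map.
Triple tensor products are written with the right-associated bracketing `A ⊗ (A ⊗ A)`.
-/

open TensorProduct

noncomputable section

variable {R : Type*} [Field R] {A : Type*} [AddCommGroup A] [Module R A]

/-- Data of a (parity-)graded module with product, unit, coproduct and BV operator:
`ι` is the parity operator `(-1)^deg`, `τ` is the Koszul twist `a⊗b ↦ (-1)^{|a||b|} b⊗a`. -/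
structure BVData (R : Type*) (A : Type*) [Field R] [AddCommGroup A] [Module R A] where
  /-- the parity operator `(-1)^deg` -/
  ι : A →ₗ[R] A
  /-- the Koszul twist `τ` -/
  τ : A ⊗[R] A →ₗ[R] A ⊗[R] A
  /-- the product `μ`, of degree 0 -/
  mul : A ⊗[R] A →ₗ[R] A
  /-- the unit `e = η(1)` -/
  e : A
  /-- the coproduct `λ`, of odd degree -/
  cop : A →ₗ[R] A ⊗[R] A
  /-- the BV operator `Δ`, of degree 1 -/
  d : A →ₗ[R] A

namespace BVData

variable (D : BVData R A)

/-- `τ ⊗ 1` on `A ⊗ (A ⊗ A)` -/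
def t12 : A ⊗[R] (A ⊗[R] A) →ₗ[R] A ⊗[R] (A ⊗[R] A) :=
  (TensorProduct.assoc R A A A).toLinearMap ∘ₗ
    map D.τ (LinearMap.id : A →ₗ[R] A) ∘ₗ (TensorProduct.assoc R A A A).symm.toLinearMap

/-- `1 ⊗ τ` on `A ⊗ (A ⊗ A)` -/
def t23 : A ⊗[R] (A ⊗[R] A) →ₗ[R] A ⊗[R] (A ⊗[R] A) :=
  map (LinearMap.id : A →ₗ[R] A) D.τ

/-- the cyclic permutation `σ = (τ⊗1)(1⊗τ)` -/
def sig : A ⊗[R] (A ⊗[R] A) →ₗ[R] A ⊗[R] (A ⊗[R] A) := D.t12 ∘ₗ D.t23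

/-- `1 + σ + σ²` -/
def cyc : A ⊗[R] (A ⊗[R] A) →ₗ[R] A ⊗[R] (A ⊗[R] A) :=
  LinearMap.id + D.sig + D.sig ∘ₗ D.sig

/-- `μ ⊗ 1` -/
def mulL : A ⊗[R] (A ⊗[R] A) →ₗ[R] A ⊗[R] A :=
  map D.mul (LinearMap.id : A →ₗ[R] A) ∘ₗ (TensorProduct.assoc R A A A).symm.toLinearMap

/-- `1 ⊗ μ` (no Koszul sign: `μ` is even) -/
def mulR : A ⊗[R] (A ⊗[R] A) →ₗ[R] A ⊗[R] A :=
  map (LinearMap.id : A →ₗ[R] A) D.mul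

/-- `λ ⊗ 1` -/
def copL : A ⊗[R] A →ₗ[R] A ⊗[R] (A ⊗[R] A) :=
  (TensorProduct.assoc R A A A).toLinearMap ∘ₗ map D.cop (LinearMap.id : A →ₗ[R] A)

/-- `1 ⊗ λ` (with Koszul sign: `λ` is odd) -/
def copR : A ⊗[R] A →ₗ[R] A ⊗[R] (A ⊗[R] A) := map D.ι D.cop

/-- `Δ ⊗ 1` -/
def dL : A ⊗[R] A →ₗ[R] A ⊗[R] A := map D.d (LinearMap.id : A →ₗ[R] A)

/-- `1 ⊗ Δ` (with Koszul sign) -/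
def dR : A ⊗[R] A →ₗ[R] A ⊗[R] A := map D.ι D.d

/-- `Δ ⊗ 1 ⊗ 1` -/
def d1 : A ⊗[R] (A ⊗[R] A) →ₗ[R] A ⊗[R] (A ⊗[R] A) :=
  map D.d (LinearMap.id : A ⊗[R] A →ₗ[R] A ⊗[R] A)

/-- `1 ⊗ Δ ⊗ 1` (with Koszul sign) -/
def d2 : A ⊗[R] (A ⊗[R] A) →ₗ[R] A ⊗[R] (A ⊗[R] A) :=
  map D.ι (map D.d (LinearMap.id : A →ₗ[R] A))

/-- `1 ⊗ 1 ⊗ Δ` (with Koszul sign) -/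
def d3 : A ⊗[R] (A ⊗[R] A) →ₗ[R] A ⊗[R] (A ⊗[R] A) :=
  map D.ι (map D.ι D.d)

/-- the copairing `λη = λ(η(1))` -/
def copair : A ⊗[R] A := D.cop D.e

/-- `(Δμ) ⊗ 1` -/
def dmul1 : A ⊗[R] (A ⊗[R] A) →ₗ[R] A ⊗[R] A :=
  map (D.d ∘ₗ D.mul) (LinearMap.id : A →ₗ[R] A)
    ∘ₗ (TensorProduct.assoc R A A A).symm.toLinearMap

/-- `(λΔ) ⊗ 1` -/
def copd1 : A ⊗[R] A →ₗ[R] A ⊗[R] (A ⊗[R] A) :=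
  (TensorProduct.assoc R A A A).toLinearMap
    ∘ₗ map (D.cop ∘ₗ D.d) (LinearMap.id : A →ₗ[R] A)

/-- the BV bracket `β = [Δ, μ] = Δμ - μ(Δ⊗1) - μ(1⊗Δ)` (degree 1) -/
def bracket : A ⊗[R] A →ₗ[R] A :=
  D.d ∘ₗ D.mul - D.mul ∘ₗ D.dL - D.mul ∘ₗ D.dR

/-- the BV cobracket `γ = [Δ, λ] = λΔ + (Δ⊗1)λ + (1⊗Δ)λ` (even degree) -/
def cobracket : A →ₗ[R] A ⊗[R] A :=
  D.cop ∘ₗ D.d + D.dL ∘ₗ D.cop + D.dR ∘ₗ D.cop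

/-- `β ⊗ 1` -/
def braL : A ⊗[R] (A ⊗[R] A) →ₗ[R] A ⊗[R] A :=
  map D.bracket (LinearMap.id : A →ₗ[R] A)
    ∘ₗ (TensorProduct.assoc R A A A).symm.toLinearMap

/-- `1 ⊗ β` (with Koszul sign: `β` is odd) -/
def braR : A ⊗[R] (A ⊗[R] A) →ₗ[R] A ⊗[R] A := map D.ι D.bracket

/-- `γ ⊗ 1` -/
def cobraL : A ⊗[R] A →ₗ[R] A ⊗[R] (A ⊗[R] A) :=
  (TensorProduct.assoc R A A A).toLinearMap
    ∘ₗ map D.cobracket (LinearMap.id : A →ₗ[R] A)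

/-- `1 ⊗ γ` (no Koszul sign: `γ` is even) -/
def cobraR : A ⊗[R] A →ₗ[R] A ⊗[R] (A ⊗[R] A) :=
  map (LinearMap.id : A →ₗ[R] A) D.cobracket

end BVData

/-- `(f ⊗ g)(1 ⊗ c ⊗ 1)` where `c ∈ A ⊗ A` is inserted in the middle and `s` is the
Koszul sign operator acting on the first slot:
`a ⊗ b ↦ Σ f(s(a) ⊗ c') ⊗ g(c'' ⊗ b)` for `c = Σ c' ⊗ c''`. -/
noncomputable def insertMid (f g : A ⊗[R] A →ₗ[R] A) (s : A →ₗ[R] A) (c : A ⊗[R] A) :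
    A ⊗[R] A →ₗ[R] A ⊗[R] A :=
  map f g
    ∘ₗ (TensorProduct.assoc R A A (A ⊗[R] A)).symm.toLinearMap
    ∘ₗ map (LinearMap.id : A →ₗ[R] A) (TensorProduct.assoc R A A A).toLinearMap
    ∘ₗ map s (TensorProduct.mk R (A ⊗[R] A) A c)

/-- Background axioms of the grading: `ι` is the parity involution, `τ` the Koszul twist;
`μ` and `η` are even, `λ` and `Δ` are odd. -/
structure IsGraded (D : BVData R A) : Prop where
  invol : D.ι ∘ₗ D.ι = LinearMap.id
  tausq : D.τ ∘ₗ D.τ = LinearMap.id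
  tau_parity : D.τ ∘ₗ map D.ι D.ι = map D.ι D.ι ∘ₗ D.τ
  tau_nat_iota : D.τ ∘ₗ map D.ι (LinearMap.id : A →ₗ[R] A)
      = map (LinearMap.id : A →ₗ[R] A) D.ι ∘ₗ D.τ
  tau_nat_d : D.τ ∘ₗ D.dL = D.dR ∘ₗ D.τ
  mul_even : D.ι ∘ₗ D.mul = D.mul ∘ₗ map D.ι D.ι
  unit_even : D.ι D.e = D.e
  cop_odd : map D.ι D.ι ∘ₗ D.cop = -(D.cop ∘ₗ D.ι)
  d_odd : D.ι ∘ₗ D.d = -(D.d ∘ₗ D.ι)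

/-- The axioms of an odd BV unital infinitesimal bialgebra. -/
structure IsBVui (D : BVData R A) extends IsGraded D : Prop where
  mul_assoc : D.mul ∘ₗ D.mulL = D.mul ∘ₗ D.mulR
  mul_comm : D.mul ∘ₗ D.τ = D.mul
  unit_mul : ∀ a : A, D.mul (D.e ⊗ₜ[R] a) = a
  mul_unit : ∀ a : A, D.mul (a ⊗ₜ[R] D.e) = a
  cop_coassoc : D.copL ∘ₗ D.cop = -(D.copR ∘ₗ D.cop)
  cop_cocomm : D.τ ∘ₗ D.cop = -D.cop
  d_squared : D.d ∘ₗ D.d = 0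
  /-- the unital infinitesimal relation
  `λμ = (1⊗μ)(λ⊗1) + (μ⊗1)(1⊗λ) - (μ⊗μ)(1⊗λη⊗1)` -/
  unital_infinitesimal :
    D.cop ∘ₗ D.mul =
      D.mulR ∘ₗ D.copL + D.mulL ∘ₗ D.copR - insertMid D.mul D.mul D.ι D.copair
  /-- the 7-term relation for `Δ` and `μ`:
  `Δμ(μ⊗1) = [μ(Δμ⊗1) - μ(μ⊗1)(Δ⊗1⊗1)](1+σ+σ²)` -/
  seven_mul :
    D.d ∘ₗ D.mul ∘ₗ D.mulL =
      (D.mul ∘ₗ D.dmul1 - D.mul ∘ₗ D.mulL ∘ₗ D.d1) ∘ₗ D.cyc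
  /-- the 7-term relation for `Δ` and `λ`:
  `(λ⊗1)λΔ = -(1+σ+σ²)[(Δ⊗1⊗1)(λ⊗1)λ + (λΔ⊗1)λ]` -/
  seven_cop :
    D.copL ∘ₗ D.cop ∘ₗ D.d =
      -(D.cyc ∘ₗ (D.d1 ∘ₗ D.copL ∘ₗ D.cop + D.copd1 ∘ₗ D.cop))
  /-- the 11-term relation for `Δ`, `μ`, `λ` and `η` -/
  eleven :
    D.cop ∘ₗ D.d ∘ₗ D.mul =
      D.cop ∘ₗ D.mul ∘ₗ D.dL + D.cop ∘ₗ D.mul ∘ₗ D.dR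
      - D.dL ∘ₗ D.cop ∘ₗ D.mul - D.dR ∘ₗ D.cop ∘ₗ D.mul
      + D.mulL ∘ₗ D.d2 ∘ₗ D.copR ∘ₗ (LinearMap.id + D.τ)
      + D.mulR ∘ₗ D.d2 ∘ₗ D.copL ∘ₗ (LinearMap.id + D.τ)
      - insertMid D.mul D.mul (D.ι ∘ₗ D.ι) (D.dR D.copair) ∘ₗ (LinearMap.id + D.τ)

/-- The axioms of an odd (BV) Frobenius algebra, without the BV Frobenius relation:
`(A, μ, λ, η, ε)` is a graded Frobenius algebra with `|μ| = 0` and `|λ|` odd,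
and `(A, μ, η, Δ)` is a BV algebra. -/
structure IsBVFrobCore (D : BVData R A) (ε : A →ₗ[R] R) extends IsGraded D : Prop where
  eps_odd : ε ∘ₗ D.ι = -ε
  mul_assoc : D.mul ∘ₗ D.mulL = D.mul ∘ₗ D.mulR
  mul_comm : D.mul ∘ₗ D.τ = D.mul
  unit_mul : ∀ a : A, D.mul (D.e ⊗ₜ[R] a) = a
  mul_unit : ∀ a : A, D.mul (a ⊗ₜ[R] D.e) = a
  cop_coassoc : D.copL ∘ₗ D.cop = -(D.copR ∘ₗ D.cop)
  cop_cocomm : D.τ ∘ₗ D.cop = -D.cop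
  /-- `(ε⊗1)λ = 1` -/
  counit_l : (TensorProduct.lid R A).toLinearMap ∘ₗ
      map ε (LinearMap.id : A →ₗ[R] A) ∘ₗ D.cop = LinearMap.id
  /-- `(1⊗ε)λ = -1` (with Koszul sign) -/
  counit_r : (TensorProduct.rid R A).toLinearMap ∘ₗ map D.ι ε ∘ₗ D.cop = -LinearMap.id
  /-- the Frobenius relation `λμ = (μ⊗1)(1⊗λ)` -/
  frobenius_l : D.cop ∘ₗ D.mul = D.mulL ∘ₗ D.copR
  /-- the Frobenius relation `λμ = (1⊗μ)(λ⊗1)` -/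
  frobenius_r : D.cop ∘ₗ D.mul = D.mulR ∘ₗ D.copL
  d_squared : D.d ∘ₗ D.d = 0
  /-- the 7-term relation for `Δ` and `μ` -/
  seven_mul :
    D.d ∘ₗ D.mul ∘ₗ D.mulL =
      (D.mul ∘ₗ D.dmul1 - D.mul ∘ₗ D.mulL ∘ₗ D.d1) ∘ₗ D.cyc

/-- The axioms of an odd BV Frobenius algebra. -/
structure IsBVFrob (D : BVData R A) (ε : A →ₗ[R] R) extends IsBVFrobCore D ε : Prop where
  /-- the BV Frobenius relation `(Δ⊗1)λη = (1⊗Δ)λη` -/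
  bv_frobenius : D.dL D.copair = D.dR D.copair

/-! ### The Drinfel'd double `D(A) = A ⊕ A^∨[1]`

We take `|λ| = -1` (only the parity of `|λ|` matters), so the double is
`D(A) = A ⊕ A^∨[1]`.  The underlying module of `A^∨[1]` is `Module.Dual R A`; the shift
maps `s : A^∨ → A^∨[1]` and `ω : A^∨[1] → A^∨` are the identity on underlying elements
and only affect the Koszul signs, which are implemented by inserting the parity operators
`ι` of `A` and `ιV = ι^∨` of `A^∨`.  The Koszul twist between graded pieces is built from
the parity projections `pe` (even part) and `po` (odd part) of `A`. -/

namespace BVData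

variable {R : Type*} [Field R] {A : Type*} [AddCommGroup A] [Module R A]
variable [FiniteDimensional R A] (D : BVData R A)

/-- the parity operator on `A^∨` -/
noncomputable def ιV : Module.Dual R A →ₗ[R] Module.Dual R A := D.ι.dualMap

/-- the Koszul-signed evaluation `ev ∘ τ : A ⊗ A^∨ → R`,
`x ⊗ φ ↦ (-1)^{|x||φ|} φ(x)` -/
noncomputable def evt : A ⊗[R] Module.Dual R A →ₗ[R] R :=
  contractRight R A ∘ₗ
    map D.ι (LinearMap.id : Module.Dual R A →ₗ[R] Module.Dual R A)

/-- the Koszul-twisted coevaluation element `τ(coev(1)) ∈ A^∨ ⊗ A` -/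
noncomputable def tcoev1 : Module.Dual R A ⊗[R] A :=
  (TensorProduct.comm R A (Module.Dual R A))
    ((map D.ι (LinearMap.id : Module.Dual R A →ₗ[R] Module.Dual R A)) (coevaluation R A 1))

/-- the product component `A^∨[1] ⊗ A → A`:  `-(ev⊗1)(1⊗λ)(ω⊗1)` -/
noncomputable def mVAA : Module.Dual R A ⊗[R] A →ₗ[R] A :=
  -((TensorProduct.lid R A).toLinearMap
    ∘ₗ map (contractLeft R A) (LinearMap.id : A →ₗ[R] A)
    ∘ₗ (TensorProduct.assoc R (Module.Dual R A) A A).symm.toLinearMap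
    ∘ₗ map D.ιV D.cop)

/-- the product component `A ⊗ A^∨[1] → A`:  `(1⊗(ev τ))(λ⊗1)(1⊗ω)` -/
noncomputable def mAVA : A ⊗[R] Module.Dual R A →ₗ[R] A :=
  (TensorProduct.rid R A).toLinearMap
    ∘ₗ map (LinearMap.id : A →ₗ[R] A) D.evt
    ∘ₗ (TensorProduct.assoc R A A (Module.Dual R A)).toLinearMap
    ∘ₗ map (D.cop ∘ₗ D.ι)
        (LinearMap.id : Module.Dual R A →ₗ[R] Module.Dual R A)

/-- the product component `A^∨[1] ⊗ A → A^∨[1]`: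
`s(ev⊗1)(1⊗μ⊗1)(1⊗1⊗coev)(ω⊗1)`  (equivalently `s(1⊗ev)(μ^∨⊗1)(ω⊗1)`) -/
noncomputable def mVAV : Module.Dual R A ⊗[R] A →ₗ[R] Module.Dual R A :=
  (TensorProduct.lid R (Module.Dual R A)).toLinearMap
    ∘ₗ map (contractLeft R A)
        (LinearMap.id : Module.Dual R A →ₗ[R] Module.Dual R A)
    ∘ₗ (TensorProduct.assoc R (Module.Dual R A) A (Module.Dual R A)).symm.toLinearMap
    ∘ₗ map (LinearMap.id : Module.Dual R A →ₗ[R] Module.Dual R A)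
        (map D.mul (LinearMap.id : Module.Dual R A →ₗ[R] Module.Dual R A)
          ∘ₗ (TensorProduct.assoc R A A (Module.Dual R A)).symm.toLinearMap
          ∘ₗ (TensorProduct.mk R A (A ⊗[R] Module.Dual R A)).flip (coevaluation R A 1))

/-- the product component `A ⊗ A^∨[1] → A^∨[1]`:
`s(1⊗(ev τ))(1⊗μ⊗1)((τ coev)⊗1⊗1)(1⊗ω)`  (equivalently `s((ev τ)⊗1)(1⊗μ^∨)(1⊗ω)`) -/
noncomputable def mAVV : A ⊗[R] Module.Dual R A →ₗ[R] Module.Dual R A :=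
  (TensorProduct.rid R (Module.Dual R A)).toLinearMap
    ∘ₗ map (LinearMap.id : Module.Dual R A →ₗ[R] Module.Dual R A)
        (D.evt
          ∘ₗ map D.mul (LinearMap.id : Module.Dual R A →ₗ[R] Module.Dual R A)
          ∘ₗ (TensorProduct.assoc R A A (Module.Dual R A)).symm.toLinearMap)
    ∘ₗ (TensorProduct.assoc R (Module.Dual R A) A
        (A ⊗[R] Module.Dual R A)).toLinearMap
    ∘ₗ TensorProduct.mk R (Module.Dual R A ⊗[R] A) (A ⊗[R] Module.Dual R A) D.tcoev1
    ∘ₗ map D.ι (LinearMap.id : Module.Dual R A →ₗ[R] Module.Dual R A)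

/-- the Koszul sign operator `φ ⊗ ψ ↦ (-1)^{|φ||ψ|} φ ⊗ ψ` on `A^∨ ⊗ A^∨`, built from the
parity projections `pe`, `po` of `A` -/
noncomputable def kVV (pe po : A →ₗ[R] A) :
    Module.Dual R A ⊗[R] Module.Dual R A →ₗ[R] Module.Dual R A ⊗[R] Module.Dual R A :=
  map pe.dualMap (LinearMap.id : Module.Dual R A →ₗ[R] Module.Dual R A)
    + map po.dualMap D.ιV

/-- `λ^∨ : (A⊗A)^∨ → A^∨` with the Koszul sign (`λ` is odd): `Φ ↦ (-1)^{|Φ|} Φ ∘ λ` -/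
noncomputable def copdual : Module.Dual R (A ⊗[R] A) →ₗ[R] Module.Dual R A :=
  D.cop.dualMap ∘ₗ (map D.ι D.ι).dualMap

/-- the product component `A^∨[1] ⊗ A^∨[1] → A^∨[1]`: `s λ^∨ (ω⊗ω)`, using the Koszul
identification `A^∨ ⊗ A^∨ ≅ (A⊗A)^∨` -/
noncomputable def mVV (pe po : A →ₗ[R] A) :
    Module.Dual R A ⊗[R] Module.Dual R A →ₗ[R] Module.Dual R A :=
  -(D.copdual ∘ₗ TensorProduct.dualDistrib R A A ∘ₗ D.kVV pe po
    ∘ₗ map D.ιV (LinearMap.id : Module.Dual R A →ₗ[R] Module.Dual R A))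

/-- the Drinfel'd double product `𝛍` on `D(A) = A ⊕ A^∨[1]`: its components are `μ` on
`A⊗A`, `sλ^∨(ω⊗ω)` on the shifted dual, and the mixed terms obtained via evaluation and
coevaluation; the components `A⊗A → A^∨[1]` and `A^∨[1]⊗A^∨[1] → A` vanish. -/
noncomputable def dmul (pe po : A →ₗ[R] A) :
    (A × Module.Dual R A) ⊗[R] (A × Module.Dual R A) →ₗ[R] A × Module.Dual R A :=
  LinearMap.inl R A (Module.Dual R A) ∘ₗ D.mul
      ∘ₗ map (LinearMap.fst R A (Module.Dual R A)) (LinearMap.fst R A (Module.Dual R A))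
  + LinearMap.inl R A (Module.Dual R A) ∘ₗ D.mVAA
      ∘ₗ map (LinearMap.snd R A (Module.Dual R A)) (LinearMap.fst R A (Module.Dual R A))
  + LinearMap.inl R A (Module.Dual R A) ∘ₗ D.mAVA
      ∘ₗ map (LinearMap.fst R A (Module.Dual R A)) (LinearMap.snd R A (Module.Dual R A))
  + LinearMap.inr R A (Module.Dual R A) ∘ₗ D.mVV pe po
      ∘ₗ map (LinearMap.snd R A (Module.Dual R A)) (LinearMap.snd R A (Module.Dual R A))
  + LinearMap.inr R A (Module.Dual R A) ∘ₗ D.mVAV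
      ∘ₗ map (LinearMap.snd R A (Module.Dual R A)) (LinearMap.fst R A (Module.Dual R A))
  + LinearMap.inr R A (Module.Dual R A) ∘ₗ D.mAVV
      ∘ₗ map (LinearMap.fst R A (Module.Dual R A)) (LinearMap.snd R A (Module.Dual R A))

end BVData

namespace BVData

variable {R : Type*} [Field R] {A : Type*} [AddCommGroup A] [Module R A]
variable [FiniteDimensional R A] (D : BVData R A)

/-- the parity operator on the double `D(A) = A ⊕ A^∨[1]` (the shift flips parity) -/
noncomputable def ιW : (A × Module.Dual R A) →ₗ[R] A × Module.Dual R A :=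
  LinearMap.prodMap D.ι (-D.ιV)

/-- the Koszul twist on `D(A) ⊗ D(A)` -/
noncomputable def tauW (pe po : A →ₗ[R] A) :
    (A × Module.Dual R A) ⊗[R] (A × Module.Dual R A) →ₗ[R]
      (A × Module.Dual R A) ⊗[R] (A × Module.Dual R A) :=
  (TensorProduct.comm R (A × Module.Dual R A) (A × Module.Dual R A)).toLinearMap
    ∘ₗ (map (LinearMap.prodMap pe po.dualMap)
          (LinearMap.id : A × Module.Dual R A →ₗ[R] A × Module.Dual R A)
        + map (LinearMap.prodMap po pe.dualMap) (D.ιW))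

/-- the BV operator `𝚫 = diag(Δ, -sΔ^∨ω)` on the double, where `Δ^∨` is defined by the
adjunction `ev(Δ^∨⊗1) = ev(1⊗Δ)`, i.e. `Δ^∨φ = (-1)^{|φ|} φ∘Δ` -/
noncomputable def bDelta : (A × Module.Dual R A) →ₗ[R] A × Module.Dual R A :=
  LinearMap.prodMap D.d (-(D.d.dualMap ∘ₗ D.ιV))

/-- the element `𝛌𝛈 = -(1⊗s)coev + τ(1⊗s)coev ∈ D(A) ⊗ D(A)` -/
noncomputable def lamEtaW (pe po : A →ₗ[R] A) :
    (A × Module.Dual R A) ⊗[R] (A × Module.Dual R A) :=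
  -(map (LinearMap.inl R A (Module.Dual R A)) (LinearMap.inr R A (Module.Dual R A)))
      ((map D.ι (LinearMap.id : Module.Dual R A →ₗ[R] Module.Dual R A))
        (coevaluation R A 1))
  + D.tauW pe po
      ((map (LinearMap.inl R A (Module.Dual R A)) (LinearMap.inr R A (Module.Dual R A)))
        ((map D.ι (LinearMap.id : Module.Dual R A →ₗ[R] Module.Dual R A))
          (coevaluation R A 1)))

end BVData


section CoevAux

variable {R : Type*} [Field R] {A : Type*} [AddCommGroup A] [Module R A]

lemma map_neg_left_apply {M N P Q : Type*} [AddCommGroup M] [Module R M]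
    [AddCommGroup N] [Module R N] [AddCommGroup P] [Module R P]
    [AddCommGroup Q] [Module R Q]
    (f : M →ₗ[R] P) (g : N →ₗ[R] Q) (x : M ⊗[R] N) :
    map (-f) g x = -(map f g x) := by
  induction x using TensorProduct.induction_on with
  | zero => simp
  | tmul m n => simp [neg_tmul]
  | add a b ha hb => simp only [map_add, ha, hb]; abel

variable [FiniteDimensional R A]

/-- Naturality of the coevaluation: `(f ⊗ 1) coev = (1 ⊗ f^∨) coev`. -/
lemma coev_nat (f : A →ₗ[R] A) :
    map f (LinearMap.id : Module.Dual R A →ₗ[R] Module.Dual R A) (coevaluation R A 1)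
      = map (LinearMap.id : A →ₗ[R] A) f.dualMap (coevaluation R A 1) := by
  rw [coevaluation_apply_one]
  set b := Module.Basis.ofVectorSpace R A with hb
  simp only [map_sum, map_tmul, LinearMap.id_coe, id_eq]
  have hL : ∀ i, f (b i) ⊗ₜ[R] b.coord i
      = ∑ j, b.coord j (f (b i)) • (b j ⊗ₜ[R] b.coord i) := by
    intro i
    calc f (b i) ⊗ₜ[R] b.coord i
        = (∑ j, b.repr (f (b i)) j • b j) ⊗ₜ[R] b.coord i := by rw [Module.Basis.sum_repr]
      _ = ∑ j, (b.repr (f (b i)) j • b j) ⊗ₜ[R] b.coord i := TensorProduct.sum_tmul _ _ _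
      _ = ∑ j, b.coord j (f (b i)) • (b j ⊗ₜ[R] b.coord i) :=
          Finset.sum_congr rfl fun j _ => by rw [Module.Basis.coord_apply, TensorProduct.smul_tmul']
  have hR : ∀ i, (b i) ⊗ₜ[R] f.dualMap (b.coord i)
      = ∑ j, b.coord i (f (b j)) • (b i ⊗ₜ[R] b.coord j) := by
    intro i
    calc (b i) ⊗ₜ[R] f.dualMap (b.coord i)
        = (b i) ⊗ₜ[R] (∑ j, f.dualMap (b.coord i) (b j) • b.coord j) := by
          rw [Module.Basis.sum_dual_apply_smul_coord]
      _ = ∑ j, (b i) ⊗ₜ[R] (f.dualMap (b.coord i) (b j) • b.coord j) :=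
          TensorProduct.tmul_sum _ _ _
      _ = ∑ j, b.coord i (f (b j)) • (b i ⊗ₜ[R] b.coord j) :=
          Finset.sum_congr rfl fun j _ => by rw [TensorProduct.tmul_smul]; rfl
  rw [Finset.sum_congr rfl fun i _ => hL i, Finset.sum_congr rfl fun i _ => hR i,
    Finset.sum_comm]

variable {W₁ W₂ : Type*} [AddCommGroup W₁] [Module R W₁] [AddCommGroup W₂] [Module R W₂]

lemma coev_L1 (f : A →ₗ[R] W₁) (g : Module.Dual R A →ₗ[R] W₂) (a : A →ₗ[R] A) :
    map (f ∘ₗ a) g (coevaluation R A 1) = map f (g ∘ₗ a.dualMap) (coevaluation R A 1) := by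
  calc map (f ∘ₗ a) g (coevaluation R A 1)
      = (map f g ∘ₗ map a LinearMap.id) (coevaluation R A 1) := by
        rw [← TensorProduct.map_comp, LinearMap.comp_id]
    _ = map f g (map LinearMap.id a.dualMap (coevaluation R A 1)) := by
        rw [LinearMap.comp_apply, coev_nat]
    _ = map f (g ∘ₗ a.dualMap) (coevaluation R A 1) := by
        rw [← LinearMap.comp_apply, ← TensorProduct.map_comp, LinearMap.comp_id]

lemma coev_L2 (f : A →ₗ[R] W₂) (g : Module.Dual R A →ₗ[R] W₁) (a : A →ₗ[R] A) :
    map g (f ∘ₗ a) (TensorProduct.comm R A (Module.Dual R A) (coevaluation R A 1))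
      = map (g ∘ₗ a.dualMap) f
          (TensorProduct.comm R A (Module.Dual R A) (coevaluation R A 1)) := by
  rw [TensorProduct.map_comm, TensorProduct.map_comm, coev_L1]

end CoevAux

set_option maxHeartbeats 1600000 in
/-- In the Drinfel'd double `D(A) = A ⊕ A^∨[1]` of a finite-dimensional
odd BV unital infinitesimal bialgebra with `λη = 0` and `|λ| = -1`, with
`𝛈 = η ∈ A`, `𝛌𝛈 = -(1⊗s)coev + τ(1⊗s)coev` and `𝚫 = diag(Δ, -sΔ^∨ω)`, the BV
Frobenius relation `(𝚫⊗1)𝛌𝛈 = (1⊗𝚫)𝛌𝛈` holds in `D(A) ⊗ D(A)`. -/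
theorem double_bv_frobenius_relation (D : BVData R A) [FiniteDimensional R A]
    (pe po : A →ₗ[R] A)
    (hsum : pe + po = LinearMap.id)
    (hpe : pe ∘ₗ pe = pe) (hpo : po ∘ₗ po = po)
    (hpepo : pe ∘ₗ po = 0) (hpope : po ∘ₗ pe = 0)
    (hiota : D.ι = pe - po)
    (h : IsBVui D) (hcopair_zero : D.copair = 0) :
    map D.bDelta (LinearMap.id : A × Module.Dual R A →ₗ[R] A × Module.Dual R A)
        (D.lamEtaW pe po)
      = map D.ιW D.bDelta (D.lamEtaW pe po) := by
  classical
  have invol := h.toIsGraded.invol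
  have d_odd := h.toIsGraded.d_odd
  -- pointwise facts
  have hi2 : ∀ a : A, D.ι (D.ι a) = a := fun a => DFunLike.congr_fun invol a
  have hdi : ∀ a : A, D.ι (D.d a) = -D.d (D.ι a) := fun a => by
    have := DFunLike.congr_fun d_odd a
    simpa using this
  have hpe' : ∀ a : A, pe (pe a) = pe a := fun a => DFunLike.congr_fun hpe a
  have hpo' : ∀ a : A, po (po a) = po a := fun a => DFunLike.congr_fun hpo a
  have hpepo' : ∀ a : A, pe (po a) = 0 := fun a => DFunLike.congr_fun hpepo a
  have hpope' : ∀ a : A, po (pe a) = 0 := fun a => DFunLike.congr_fun hpope a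
  have hpei : ∀ a : A, pe (D.ι a) = pe a := fun a => by
    rw [hiota]; simp [hpe', hpepo']
  have hpoi : ∀ a : A, po (D.ι a) = -po a := fun a => by
    rw [hiota]; simp [hpo', hpope']
  have hiV2 : ∀ φ : Module.Dual R A, D.ιV (D.ιV φ) = φ := fun φ => by
    show D.ι.dualMap (D.ι.dualMap φ) = φ
    ext a
    simp [LinearMap.dualMap_apply, hi2]
  have pneg1 : ∀ x : Module.Dual R A, ((0 : A), -x) = -(((0 : A), x)) := fun x => by
    simp
  have pneg2 : ∀ x : A, (-x, (0 : Module.Dual R A)) = -((x, (0 : Module.Dual R A))) := fun x => by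
    simp
  have hlam : D.lamEtaW pe po =
      D.tauW pe po ((map (LinearMap.inl R A (Module.Dual R A)) (LinearMap.inr R A (Module.Dual R A)))
          ((map D.ι (LinearMap.id : Module.Dual R A →ₗ[R] Module.Dual R A)) (coevaluation R A 1)))
        - (map (LinearMap.inl R A (Module.Dual R A)) (LinearMap.inr R A (Module.Dual R A)))
          ((map D.ι (LinearMap.id : Module.Dual R A →ₗ[R] Module.Dual R A)) (coevaluation R A 1)) := by
    simp only [BVData.lamEtaW]
    abel
  have hL : ∀ x : A ⊗[R] Module.Dual R A,
      map D.bDelta (LinearMap.id : A × Module.Dual R A →ₗ[R] A × Module.Dual R A)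
        (D.tauW pe po ((map (LinearMap.inl R A (Module.Dual R A)) (LinearMap.inr R A (Module.Dual R A))) ((map D.ι (LinearMap.id : Module.Dual R A →ₗ[R] Module.Dual R A)) x))
          - (map (LinearMap.inl R A (Module.Dual R A)) (LinearMap.inr R A (Module.Dual R A))) ((map D.ι (LinearMap.id : Module.Dual R A →ₗ[R] Module.Dual R A)) x))
      = -(map ((LinearMap.inl R A (Module.Dual R A)) ∘ₗ (D.d ∘ₗ D.ι)) (LinearMap.inr R A (Module.Dual R A)) x)
        - map ((LinearMap.inr R A (Module.Dual R A)) ∘ₗ (D.d.dualMap ∘ₗ D.ιV)) ((LinearMap.inl R A (Module.Dual R A)) ∘ₗ pe) (TensorProduct.comm R A (Module.Dual R A) x)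
        - map ((LinearMap.inr R A (Module.Dual R A)) ∘ₗ D.d.dualMap) ((LinearMap.inl R A (Module.Dual R A)) ∘ₗ po) (TensorProduct.comm R A (Module.Dual R A) x) := by
    intro x
    induction x using TensorProduct.induction_on with
    | zero => simp [BVData.tauW]; abel
    | tmul a φ =>
        simp [BVData.tauW, BVData.ιW, BVData.bDelta, hpei, hpoi, hiV2, hi2,
          TensorProduct.comm_tmul, LinearMap.prodMap_apply, tmul_neg, neg_tmul,
          tmul_add, add_tmul, sub_tmul, tmul_sub, LinearMap.add_apply]
        simp only [pneg1, pneg2, neg_tmul, tmul_neg, neg_neg]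
        abel
    | add x y hx hy =>
        simp only [map_add, map_sub]
        simp only [map_sub] at hx hy
        have e : ∀ a b c d : (A × Module.Dual R A) ⊗[R] (A × Module.Dual R A),
            a + b - (c + d) = (a - c) + (b - d) := fun a b c d => by abel
        rw [e, hx, hy]
        abel
  have hR : ∀ x : A ⊗[R] Module.Dual R A,
      map D.ιW D.bDelta
        (D.tauW pe po ((map (LinearMap.inl R A (Module.Dual R A)) (LinearMap.inr R A (Module.Dual R A))) ((map D.ι (LinearMap.id : Module.Dual R A →ₗ[R] Module.Dual R A)) x))
          - (map (LinearMap.inl R A (Module.Dual R A)) (LinearMap.inr R A (Module.Dual R A))) ((map D.ι (LinearMap.id : Module.Dual R A →ₗ[R] Module.Dual R A)) x))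
      = map (LinearMap.inl R A (Module.Dual R A)) ((LinearMap.inr R A (Module.Dual R A)) ∘ₗ (D.d.dualMap ∘ₗ D.ιV)) x
        - map ((LinearMap.inr R A (Module.Dual R A)) ∘ₗ D.ιV) ((LinearMap.inl R A (Module.Dual R A)) ∘ₗ (D.d ∘ₗ pe)) (TensorProduct.comm R A (Module.Dual R A) x)
        - map (LinearMap.inr R A (Module.Dual R A)) ((LinearMap.inl R A (Module.Dual R A)) ∘ₗ (D.d ∘ₗ po)) (TensorProduct.comm R A (Module.Dual R A) x) := by
    intro x
    induction x using TensorProduct.induction_on with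
    | zero => simp [BVData.tauW]
    | tmul a φ =>
        simp [BVData.tauW, BVData.ιW, BVData.bDelta, hpei, hpoi, hiV2, hi2,
          TensorProduct.comm_tmul, LinearMap.prodMap_apply, tmul_neg, neg_tmul,
          tmul_add, add_tmul, sub_tmul, tmul_sub, LinearMap.add_apply]
        simp only [pneg1, pneg2, neg_tmul, tmul_neg, neg_neg]
        abel
    | add x y hx hy =>
        simp only [map_add, map_sub]
        simp only [map_sub] at hx hy
        have e : ∀ a b c d : (A × Module.Dual R A) ⊗[R] (A × Module.Dual R A),
            a + b - (c + d) = (a - c) + (b - d) := fun a b c d => by abel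
        rw [e, hx, hy]
        abel
  rw [hlam, hL, hR]
  have T1 : -(map ((LinearMap.inl R A (Module.Dual R A)) ∘ₗ (D.d ∘ₗ D.ι)) (LinearMap.inr R A (Module.Dual R A)) (coevaluation R A 1))
      = map (LinearMap.inl R A (Module.Dual R A)) ((LinearMap.inr R A (Module.Dual R A)) ∘ₗ (D.d.dualMap ∘ₗ D.ιV)) (coevaluation R A 1) := by
    have e1 : (-(LinearMap.inl R A (Module.Dual R A))) ∘ₗ (D.ι ∘ₗ D.d) = (LinearMap.inl R A (Module.Dual R A)) ∘ₗ (D.d ∘ₗ D.ι) := by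
      ext a <;> simp [hdi]
    calc -(map ((LinearMap.inl R A (Module.Dual R A)) ∘ₗ (D.d ∘ₗ D.ι)) (LinearMap.inr R A (Module.Dual R A)) (coevaluation R A 1))
        = -(map ((-(LinearMap.inl R A (Module.Dual R A))) ∘ₗ (D.ι ∘ₗ D.d)) (LinearMap.inr R A (Module.Dual R A)) (coevaluation R A 1)) := by rw [e1]
      _ = -(map (-(LinearMap.inl R A (Module.Dual R A))) ((LinearMap.inr R A (Module.Dual R A)) ∘ₗ (D.ι ∘ₗ D.d).dualMap) (coevaluation R A 1)) := by
          rw [coev_L1]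
      _ = map (LinearMap.inl R A (Module.Dual R A)) ((LinearMap.inr R A (Module.Dual R A)) ∘ₗ (D.ι ∘ₗ D.d).dualMap) (coevaluation R A 1) := by
          rw [map_neg_left_apply]
          exact neg_neg ((map (LinearMap.inl R A (Module.Dual R A)) ((LinearMap.inr R A (Module.Dual R A)) ∘ₗ (D.ι ∘ₗ D.d).dualMap)) (coevaluation R A 1))
      _ = map (LinearMap.inl R A (Module.Dual R A)) ((LinearMap.inr R A (Module.Dual R A)) ∘ₗ (D.d.dualMap ∘ₗ D.ιV)) (coevaluation R A 1) := rfl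
  have T2 : map ((LinearMap.inr R A (Module.Dual R A)) ∘ₗ (D.d.dualMap ∘ₗ D.ιV)) ((LinearMap.inl R A (Module.Dual R A)) ∘ₗ pe) (TensorProduct.comm R A (Module.Dual R A) (coevaluation R A 1))
      = map (LinearMap.inr R A (Module.Dual R A)) ((LinearMap.inl R A (Module.Dual R A)) ∘ₗ (pe ∘ₗ D.d)) (TensorProduct.comm R A (Module.Dual R A) (coevaluation R A 1)) := by
    have e2 : map ((LinearMap.inr R A (Module.Dual R A)) ∘ₗ (D.d.dualMap ∘ₗ D.ιV)) ((LinearMap.inl R A (Module.Dual R A)) ∘ₗ pe) (TensorProduct.comm R A (Module.Dual R A) (coevaluation R A 1))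
        = map (LinearMap.inr R A (Module.Dual R A)) (((LinearMap.inl R A (Module.Dual R A)) ∘ₗ pe) ∘ₗ (D.ι ∘ₗ D.d)) (TensorProduct.comm R A (Module.Dual R A) (coevaluation R A 1)) :=
      (coev_L2 ((LinearMap.inl R A (Module.Dual R A)) ∘ₗ pe) (LinearMap.inr R A (Module.Dual R A)) (D.ι ∘ₗ D.d)).symm
    rw [e2]
    congr 2
    apply LinearMap.ext
    intro a
    simp only [LinearMap.comp_apply]
    rw [hpei]
  have T3 : map ((LinearMap.inr R A (Module.Dual R A)) ∘ₗ D.d.dualMap) ((LinearMap.inl R A (Module.Dual R A)) ∘ₗ po) (TensorProduct.comm R A (Module.Dual R A) (coevaluation R A 1))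
      = map (LinearMap.inr R A (Module.Dual R A)) ((LinearMap.inl R A (Module.Dual R A)) ∘ₗ (po ∘ₗ D.d)) (TensorProduct.comm R A (Module.Dual R A) (coevaluation R A 1)) := by
    have e3 : map ((LinearMap.inr R A (Module.Dual R A)) ∘ₗ D.d.dualMap) ((LinearMap.inl R A (Module.Dual R A)) ∘ₗ po) (TensorProduct.comm R A (Module.Dual R A) (coevaluation R A 1))
        = map (LinearMap.inr R A (Module.Dual R A)) (((LinearMap.inl R A (Module.Dual R A)) ∘ₗ po) ∘ₗ D.d) (TensorProduct.comm R A (Module.Dual R A) (coevaluation R A 1)) :=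
      (coev_L2 ((LinearMap.inl R A (Module.Dual R A)) ∘ₗ po) (LinearMap.inr R A (Module.Dual R A)) D.d).symm
    rw [e3]
    rfl
  have T4 : map ((LinearMap.inr R A (Module.Dual R A)) ∘ₗ D.ιV) ((LinearMap.inl R A (Module.Dual R A)) ∘ₗ (D.d ∘ₗ pe)) (TensorProduct.comm R A (Module.Dual R A) (coevaluation R A 1))
      = map (LinearMap.inr R A (Module.Dual R A)) ((LinearMap.inl R A (Module.Dual R A)) ∘ₗ (D.d ∘ₗ pe)) (TensorProduct.comm R A (Module.Dual R A) (coevaluation R A 1)) := by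
    have e4 : map ((LinearMap.inr R A (Module.Dual R A)) ∘ₗ D.ιV) ((LinearMap.inl R A (Module.Dual R A)) ∘ₗ (D.d ∘ₗ pe)) (TensorProduct.comm R A (Module.Dual R A) (coevaluation R A 1))
        = map (LinearMap.inr R A (Module.Dual R A)) (((LinearMap.inl R A (Module.Dual R A)) ∘ₗ (D.d ∘ₗ pe)) ∘ₗ D.ι) (TensorProduct.comm R A (Module.Dual R A) (coevaluation R A 1)) :=
      (coev_L2 ((LinearMap.inl R A (Module.Dual R A)) ∘ₗ (D.d ∘ₗ pe)) (LinearMap.inr R A (Module.Dual R A)) D.ι).symm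
    rw [e4]
    congr 2
    apply LinearMap.ext
    intro a
    simp only [LinearMap.comp_apply]
    rw [hpei]
  rw [T1, T2, T3, T4]
  have key : map (LinearMap.inr R A (Module.Dual R A)) ((LinearMap.inl R A (Module.Dual R A)) ∘ₗ (pe ∘ₗ D.d)) (TensorProduct.comm R A (Module.Dual R A) (coevaluation R A 1)) + map (LinearMap.inr R A (Module.Dual R A)) ((LinearMap.inl R A (Module.Dual R A)) ∘ₗ (po ∘ₗ D.d)) (TensorProduct.comm R A (Module.Dual R A) (coevaluation R A 1)) = map (LinearMap.inr R A (Module.Dual R A)) ((LinearMap.inl R A (Module.Dual R A)) ∘ₗ (D.d ∘ₗ pe)) (TensorProduct.comm R A (Module.Dual R A) (coevaluation R A 1)) + map (LinearMap.inr R A (Module.Dual R A)) ((LinearMap.inl R A (Module.Dual R A)) ∘ₗ (D.d ∘ₗ po)) (TensorProduct.comm R A (Module.Dual R A) (coevaluation R A 1)) := by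
    calc map (LinearMap.inr R A (Module.Dual R A)) ((LinearMap.inl R A (Module.Dual R A)) ∘ₗ (pe ∘ₗ D.d)) (TensorProduct.comm R A (Module.Dual R A) (coevaluation R A 1)) + map (LinearMap.inr R A (Module.Dual R A)) ((LinearMap.inl R A (Module.Dual R A)) ∘ₗ (po ∘ₗ D.d)) (TensorProduct.comm R A (Module.Dual R A) (coevaluation R A 1))
        = map (LinearMap.inr R A (Module.Dual R A)) ((LinearMap.inl R A (Module.Dual R A)) ∘ₗ (pe ∘ₗ D.d) + (LinearMap.inl R A (Module.Dual R A)) ∘ₗ (po ∘ₗ D.d)) (TensorProduct.comm R A (Module.Dual R A) (coevaluation R A 1)) := by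
          rw [TensorProduct.map_add_right]; exact (LinearMap.add_apply _ _ _).symm
      _ = map (LinearMap.inr R A (Module.Dual R A)) ((LinearMap.inl R A (Module.Dual R A)) ∘ₗ (D.d ∘ₗ pe) + (LinearMap.inl R A (Module.Dual R A)) ∘ₗ (D.d ∘ₗ po)) (TensorProduct.comm R A (Module.Dual R A) (coevaluation R A 1)) := by
          congr 2
          apply LinearMap.ext
          intro a
          simp only [LinearMap.add_apply, LinearMap.comp_apply, LinearMap.inl_apply,
            Prod.mk_add_mk, add_zero]
          have h1 := DFunLike.congr_fun hsum (D.d a)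
          have h2 := DFunLike.congr_fun hsum a
          simp only [LinearMap.add_apply, LinearMap.id_coe, id_eq] at h1 h2
          rw [h1, show D.d (pe a) + D.d (po a) = D.d a by rw [← map_add, h2]]
      _ = map (LinearMap.inr R A (Module.Dual R A)) ((LinearMap.inl R A (Module.Dual R A)) ∘ₗ (D.d ∘ₗ pe)) (TensorProduct.comm R A (Module.Dual R A) (coevaluation R A 1)) + map (LinearMap.inr R A (Module.Dual R A)) ((LinearMap.inl R A (Module.Dual R A)) ∘ₗ (D.d ∘ₗ po)) (TensorProduct.comm R A (Module.Dual R A) (coevaluation R A 1)) := by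
          rw [TensorProduct.map_add_right]; exact LinearMap.add_apply _ _ _
  calc map (LinearMap.inl R A (Module.Dual R A)) ((LinearMap.inr R A (Module.Dual R A)) ∘ₗ (D.d.dualMap ∘ₗ D.ιV)) (coevaluation R A 1) - map (LinearMap.inr R A (Module.Dual R A)) ((LinearMap.inl R A (Module.Dual R A)) ∘ₗ (pe ∘ₗ D.d)) (TensorProduct.comm R A (Module.Dual R A) (coevaluation R A 1)) - map (LinearMap.inr R A (Module.Dual R A)) ((LinearMap.inl R A (Module.Dual R A)) ∘ₗ (po ∘ₗ D.d)) (TensorProduct.comm R A (Module.Dual R A) (coevaluation R A 1))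
      = map (LinearMap.inl R A (Module.Dual R A)) ((LinearMap.inr R A (Module.Dual R A)) ∘ₗ (D.d.dualMap ∘ₗ D.ιV)) (coevaluation R A 1) - (map (LinearMap.inr R A (Module.Dual R A)) ((LinearMap.inl R A (Module.Dual R A)) ∘ₗ (pe ∘ₗ D.d)) (TensorProduct.comm R A (Module.Dual R A) (coevaluation R A 1)) + map (LinearMap.inr R A (Module.Dual R A)) ((LinearMap.inl R A (Module.Dual R A)) ∘ₗ (po ∘ₗ D.d)) (TensorProduct.comm R A (Module.Dual R A) (coevaluation R A 1))) := by abel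
    _ = map (LinearMap.inl R A (Module.Dual R A)) ((LinearMap.inr R A (Module.Dual R A)) ∘ₗ (D.d.dualMap ∘ₗ D.ιV)) (coevaluation R A 1) - (map (LinearMap.inr R A (Module.Dual R A)) ((LinearMap.inl R A (Module.Dual R A)) ∘ₗ (D.d ∘ₗ pe)) (TensorProduct.comm R A (Module.Dual R A) (coevaluation R A 1)) + map (LinearMap.inr R A (Module.Dual R A)) ((LinearMap.inl R A (Module.Dual R A)) ∘ₗ (D.d ∘ₗ po)) (TensorProduct.comm R A (Module.Dual R A) (coevaluation R A 1))) := by rw [key]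
    _ = map (LinearMap.inl R A (Module.Dual R A)) ((LinearMap.inr R A (Module.Dual R A)) ∘ₗ (D.d.dualMap ∘ₗ D.ιV)) (coevaluation R A 1) - map (LinearMap.inr R A (Module.Dual R A)) ((LinearMap.inl R A (Module.Dual R A)) ∘ₗ (D.d ∘ₗ pe)) (TensorProduct.comm R A (Module.Dual R A) (coevaluation R A 1)) - map (LinearMap.inr R A (Module.Dual R A)) ((LinearMap.inl R A (Module.Dual R A)) ∘ₗ (D.d ∘ₗ po)) (TensorProduct.comm R A (Module.Dual R A) (coevaluation R A 1)) := by abel
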